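/- Let n ≥ 4 be an integer. Then ∫_{ℝ^{n−1}} ( ȳ·∇_{ȳ}U(ȳ,0) + ((n−2)/2)U(ȳ,0) ) U(ȳ,0) dȳ = ((n−2)/2) ∫_{ℝ^{n−1}} (1−|ȳ|²)/(1+|ȳ|²)^{n−1} dȳ = −((n−2)/(n−1)) ω_{n−2} I_{n−1}^n; in particular this integral is finite and strictly negative. -/

import Mathlib

open MeasureTheory Set Metric

/-- `I m α = ∫_0^∞ s^α / (1+s²)^m ds`. -/
noncomputable def paperI (m α : ℝ) : ℝ := ∫ s in Ioi (0 : ℝ), s ^ α / (1 + s ^ 2) ^ m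

/-- `ω k`: the `k`-dimensional surface measure of the unit sphere `S^k ⊂ ℝ^{k+1}`,
namely `(k+1)` times the volume of the unit ball of `ℝ^{k+1}`. -/
noncomputable def sphereVol (k : ℕ) : ℝ :=
  ((k : ℝ) + 1) * (volume (ball (0 : EuclideanSpace ℝ (Fin (k + 1))) 1)).toReal

/-- The trace of the standard bubble on the boundary:
`U(ȳ,0) = (1+|ȳ|²)^{-(n-2)/2}` as a function of `ȳ ∈ ℝ^{n-1}`. -/
noncomputable def bubbleTrace (n : ℕ) (z : EuclideanSpace ℝ (Fin (n - 1))) : ℝ :=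
  (1 + ‖z‖ ^ 2) ^ (-(((n : ℝ) - 2) / 2))

/-! Pointwise, `(ȳ·∇U + (n-2)/2 U) U = (n-2)/2 (1 - |ȳ|²)/(1 + |ȳ|²)^(n-1)` on `ℝ^d`,
`d = n - 1`. In polar coordinates the radial integrand is `r^(d-1) (1 - r²)/(1 + r²)^d`, and
`d r^(d-1) (1 - r²)/(1 + r²)^d = (r^d/(1 + r²)^(d-1))' - 2 r^(d+1)/(1 + r²)^d`,
where the boundary term vanishes for `d ≥ 3`; so the radial integral is `-(2/d) I_d^{d+1} < 0`. -/

open Module Filter Topology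

lemma integrableOn_Ioi_pow_div_one_add_sq_pow {k d : ℕ} (h : k + 2 ≤ 2 * d) :
    IntegrableOn (fun r : ℝ => r ^ k / (1 + r ^ 2) ^ d) (Ioi 0) := by
  have hcont : Continuous fun r : ℝ => r ^ k / (1 + r ^ 2) ^ d :=
    Continuous.div (by fun_prop) (by fun_prop) fun r => by positivity
  rw [← Ioc_union_Ioi_eq_Ioi zero_le_one]
  refine hcont.integrableOn_Ioc.union ?_
  have hdecay : IntegrableOn (fun r : ℝ => r ^ ((k : ℝ) - 2 * d)) (Ioi 1) := by
    have : (k : ℝ) + 2 ≤ 2 * d := by exact_mod_cast h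
    exact integrableOn_Ioi_rpow_of_lt (by linarith) zero_lt_one
  refine hdecay.mono' hcont.aestronglyMeasurable.restrict ?_
  filter_upwards [ae_restrict_mem measurableSet_Ioi] with r (hr : 1 < r)
  have hr0 : 0 < r := zero_lt_one.trans hr
  rw [Real.norm_of_nonneg (by positivity), Real.rpow_sub hr0, Real.rpow_natCast,
    show (2 : ℝ) * d = (2 * d : ℕ) by push_cast; ring, Real.rpow_natCast, pow_mul]
  gcongr
  linarith

lemma paperI_natCast (m k : ℕ) :
    paperI m k = ∫ s in Ioi (0 : ℝ), s ^ k / (1 + s ^ 2) ^ m := by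
  simp only [paperI, Real.rpow_natCast]

lemma paperI_natCast_pos {m k : ℕ} (h : k + 2 ≤ 2 * m) : 0 < paperI m k := by
  rw [paperI_natCast, setIntegral_pos_iff_support_of_nonneg_ae ?_
    (integrableOn_Ioi_pow_div_one_add_sq_pow h)]
  · have hsupp :
        Ioi (0 : ℝ) ⊆ Function.support (fun s : ℝ => s ^ k / (1 + s ^ 2) ^ m) ∩ Ioi 0 :=
      fun s (hs : 0 < s) => ⟨(by positivity : s ^ k / (1 + s ^ 2) ^ m ≠ 0), hs⟩
    refine lt_of_lt_of_le ?_ (measure_mono hsupp)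
    simp
  · filter_upwards [ae_restrict_mem measurableSet_Ioi] with s (hs : 0 < s)
    positivity

lemma hasDerivAt_pow_succ_div_one_add_sq_pow (d : ℕ) (r : ℝ) :
    HasDerivAt (fun r : ℝ => r ^ (d + 1) / (1 + r ^ 2) ^ d)
      ((d + 1) * (r ^ d * ((1 - r ^ 2) / (1 + r ^ 2) ^ (d + 1)))
        + 2 * (r ^ (d + 2) / (1 + r ^ 2) ^ (d + 1))) r := by
  have hnum : HasDerivAt (fun r : ℝ => r ^ (d + 1)) ((d + 1) * r ^ d) r := by
    simpa using hasDerivAt_pow (d + 1) r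
  have hden :
      HasDerivAt (fun r : ℝ => (1 + r ^ 2) ^ d) (d * (1 + r ^ 2) ^ (d - 1) * (2 * r)) r := by
    simpa using ((hasDerivAt_pow 2 r).const_add 1).fun_pow d
  refine (hnum.fun_div hden (by positivity)).congr_deriv ?_
  have : (1 + r ^ 2) ≠ 0 := by positivity
  rcases d with _ | d
  · field_simp
    ring
  · field_simp
    push_cast
    ring

lemma tendsto_pow_succ_div_one_add_sq_pow_atTop {d : ℕ} (hd : 2 ≤ d) :
    Tendsto (fun r : ℝ => r ^ (d + 1) / (1 + r ^ 2) ^ d) atTop (𝓝 0) := by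
  refine squeeze_zero_norm' ?_ tendsto_inv_atTop_zero
  filter_upwards [eventually_ge_atTop (1 : ℝ)] with r (hr : 1 ≤ r)
  have hr0 : 0 < r := zero_lt_one.trans_le hr
  rw [Real.norm_of_nonneg (by positivity)]
  calc r ^ (d + 1) / (1 + r ^ 2) ^ d ≤ r ^ (d + 1) / (r ^ 2) ^ d := by gcongr; linarith
    _ = (r ^ (d - 2) * r) ⁻¹ := by
        rw [← pow_mul, ← pow_succ]
        field_simp
        rw [← pow_add]
        congr 1
        omega
    _ ≤ r⁻¹ := by
        gcongr
        exact le_mul_of_one_le_left hr0.le (one_le_pow₀ hr)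

lemma integral_Ioi_pow_mul_one_sub_sq_div {d : ℕ} (hd : 2 ≤ d) :
    (d + 1 : ℝ) * ∫ r in Ioi (0 : ℝ), r ^ d * ((1 - r ^ 2) / (1 + r ^ 2) ^ (d + 1)) =
      -2 * paperI (d + 1) (d + 2) := by
  have hnum := integrableOn_Ioi_pow_div_one_add_sq_pow (k := d) (d := d + 1) (by omega)
  have htail := integrableOn_Ioi_pow_div_one_add_sq_pow (k := d + 2) (d := d + 1) (by omega)
  have hmain : IntegrableOn (fun r : ℝ => r ^ d * ((1 - r ^ 2) / (1 + r ^ 2) ^ (d + 1)))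
      (Ioi 0) := by
    refine (hnum.sub htail).congr_fun (fun r _ => ?_) measurableSet_Ioi
    simp only [Pi.sub_apply]
    ring
  have hftc := integral_Ioi_of_hasDerivAt_of_tendsto' (a := 0)
    (fun r _ => hasDerivAt_pow_succ_div_one_add_sq_pow d r)
    ((hmain.const_mul _).add (htail.const_mul _)) (tendsto_pow_succ_div_one_add_sq_pow_atTop hd)
  rw [integral_add (hmain.const_mul _) (htail.const_mul _), integral_const_mul,
    integral_const_mul] at hftc
  have hI : paperI (d + 1) (d + 2) =
      ∫ r in Ioi (0 : ℝ), r ^ (d + 2) / (1 + r ^ 2) ^ (d + 1) := by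
    exact_mod_cast paperI_natCast (d + 1) (d + 2)
  rw [hI]
  simp only [zero_pow d.succ_ne_zero, zero_div, zero_sub] at hftc
  linarith

section FiniteDimensional

variable {E : Type*} [NormedAddCommGroup E] [InnerProductSpace ℝ E] [FiniteDimensional ℝ E]
  [MeasurableSpace E] [BorelSpace E] (μ : Measure E) [μ.IsAddHaarMeasure]

lemma integrable_one_sub_norm_sq_div_one_add_norm_sq_rpow {s : ℝ}
    (hs : finrank ℝ E < 2 * (s - 1)) :
    Integrable (fun z : E => (1 - ‖z‖ ^ 2) / (1 + ‖z‖ ^ 2) ^ s) μ := by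
  refine (integrable_rpow_neg_one_add_norm_sq hs).mono'
    (by fun_prop : Measurable _).aestronglyMeasurable (.of_forall fun z => ?_)
  have hsq : 0 ≤ ‖z‖ ^ 2 := by positivity
  have hpos : 0 < 1 + ‖z‖ ^ 2 := by positivity
  have hnum : |1 - ‖z‖ ^ 2| ≤ 1 + ‖z‖ ^ 2 := abs_le.2 ⟨by linarith, by linarith⟩
  calc ‖(1 - ‖z‖ ^ 2) / (1 + ‖z‖ ^ 2) ^ s‖
        = |1 - ‖z‖ ^ 2| / (1 + ‖z‖ ^ 2) ^ s := by
        rw [Real.norm_eq_abs, abs_div, abs_of_pos (Real.rpow_pos_of_pos hpos s)]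
    _ ≤ (1 + ‖z‖ ^ 2) / (1 + ‖z‖ ^ 2) ^ s := by gcongr
    _ = (1 + ‖z‖ ^ 2) ^ (-(2 * (s - 1)) / 2) := by
        rw [show -(2 * (s - 1)) / 2 = 1 - s by ring, Real.rpow_sub hpos, Real.rpow_one]

lemma integral_one_sub_norm_sq_div_one_add_norm_sq_rpow_finrank (hE : 3 ≤ finrank ℝ E) :
    ∫ z, (1 - ‖z‖ ^ 2) / (1 + ‖z‖ ^ 2) ^ (finrank ℝ E : ℝ) ∂μ =
      -2 * μ.real (ball 0 1) * paperI (finrank ℝ E) (finrank ℝ E + 1) := by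
  have : Nontrivial E := Module.nontrivial_of_finrank_pos (R := ℝ) (by omega)
  obtain ⟨d, hd⟩ : ∃ d, finrank ℝ E = d + 1 := ⟨finrank ℝ E - 1, by omega⟩
  have hpolar :=
    integral_fun_norm_addHaar μ fun r => (1 - r ^ 2) / (1 + r ^ 2) ^ (finrank ℝ E : ℝ)
  simp only [hd, Nat.add_sub_cancel, smul_eq_mul, nsmul_eq_mul] at hpolar
  rw [hd, hpolar]
  simp only [Real.rpow_natCast]
  push_cast
  rw [mul_left_comm, integral_Ioi_pow_mul_one_sub_sq_div (by omega), add_assoc,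
    one_add_one_eq_two]
  ring

end FiniteDimensional

lemma fderiv_one_add_norm_sq_rpow_apply_self {E : Type*} [NormedAddCommGroup E]
    [InnerProductSpace ℝ E] (p : ℝ) (z : E) :
    fderiv ℝ (fun z : E => (1 + ‖z‖ ^ 2) ^ p) z z =
      2 * p * ‖z‖ ^ 2 * (1 + ‖z‖ ^ 2) ^ (p - 1) := by
  have hpos : 0 < 1 + ‖z‖ ^ 2 := by positivity
  rw [((hasStrictFDerivAt_norm_sq z).hasFDerivAt.const_add 1).rpow_const
    (Or.inl hpos.ne') |>.fderiv]
  simp only [smul_apply, innerSL_apply_apply, smul_eq_mul, nsmul_eq_mul,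
    Nat.cast_ofNat, real_inner_self_eq_norm_sq]
  ring

lemma fderiv_apply_self_add_mul_mul_one_add_norm_sq_rpow_neg {E : Type*} [NormedAddCommGroup E]
    [InnerProductSpace ℝ E] (a : ℝ) (z : E) :
    (fderiv ℝ (fun z : E => (1 + ‖z‖ ^ 2) ^ (-a)) z z + a * (1 + ‖z‖ ^ 2) ^ (-a)) *
        (1 + ‖z‖ ^ 2) ^ (-a) =
      a * ((1 - ‖z‖ ^ 2) / (1 + ‖z‖ ^ 2) ^ (2 * a + 1)) := by
  have hpos : 0 < 1 + ‖z‖ ^ 2 := by positivity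
  rw [fderiv_one_add_norm_sq_rpow_apply_self, Real.rpow_sub_one hpos.ne',
    div_eq_mul_inv _ ((1 + ‖z‖ ^ 2) ^ (2 * a + 1)), ← Real.rpow_neg hpos.le,
    show -(2 * a + 1) = -a + -a - 1 by ring, Real.rpow_sub_one hpos.ne', Real.rpow_add hpos]
  field_simp
  ring

lemma bubbleTrace_fderiv_apply_self_add_mul_mul (n : ℕ) (z : EuclideanSpace ℝ (Fin (n - 1))) :
    (fderiv ℝ (bubbleTrace n) z z + ((n : ℝ) - 2) / 2 * bubbleTrace n z) * bubbleTrace n z =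
      ((n : ℝ) - 2) / 2 * ((1 - ‖z‖ ^ 2) / (1 + ‖z‖ ^ 2) ^ ((n : ℝ) - 1)) := by
  rw [show (n : ℝ) - 1 = 2 * (((n : ℝ) - 2) / 2) + 1 by ring]
  exact fderiv_apply_self_add_mul_mul_one_add_norm_sq_rpow_neg _ z

lemma sphereVol_sub_two {n : ℕ} (hn : 2 ≤ n) :
    sphereVol (n - 2) =
      ((n : ℝ) - 1) * volume.real (ball (0 : EuclideanSpace ℝ (Fin (n - 1))) 1) := by
  obtain ⟨k, rfl⟩ : ∃ k, n = k + 2 := ⟨n - 2, by omega⟩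
  rw [sphereVol, measureReal_def]
  congr 1
  push_cast
  ring

theorem stmt12 (n : ℕ) (hn : 4 ≤ n) :
    Integrable (fun z : EuclideanSpace ℝ (Fin (n - 1)) =>
        (fderiv ℝ (bubbleTrace n) z z + ((n : ℝ) - 2) / 2 * bubbleTrace n z) *
          bubbleTrace n z) ∧
    (∫ z : EuclideanSpace ℝ (Fin (n - 1)),
        (fderiv ℝ (bubbleTrace n) z z + ((n : ℝ) - 2) / 2 * bubbleTrace n z) *
          bubbleTrace n z) =
      ((n : ℝ) - 2) / 2 *
        ∫ z : EuclideanSpace ℝ (Fin (n - 1)),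
          (1 - ‖z‖ ^ 2) / (1 + ‖z‖ ^ 2) ^ ((n : ℝ) - 1) ∧
    (∫ z : EuclideanSpace ℝ (Fin (n - 1)),
        (fderiv ℝ (bubbleTrace n) z z + ((n : ℝ) - 2) / 2 * bubbleTrace n z) *
          bubbleTrace n z) =
      -(((n : ℝ) - 2) / ((n : ℝ) - 1)) * sphereVol (n - 2) * paperI ((n : ℝ) - 1) n ∧
    (∫ z : EuclideanSpace ℝ (Fin (n - 1)),
        (fderiv ℝ (bubbleTrace n) z z + ((n : ℝ) - 2) / 2 * bubbleTrace n z) *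
          bubbleTrace n z) < 0 := by
  have hdim : finrank ℝ (EuclideanSpace ℝ (Fin (n - 1))) = n - 1 := finrank_euclideanSpace_fin
  have hcast : ((n - 1 : ℕ) : ℝ) = n - 1 := by rw [Nat.cast_sub (by omega), Nat.cast_one]
  have hn' : (4 : ℝ) ≤ n := by exact_mod_cast hn
  have hintegrand := funext (bubbleTrace_fderiv_apply_self_add_mul_mul n)
  have hint := integrable_one_sub_norm_sq_div_one_add_norm_sq_rpow
    (volume : Measure (EuclideanSpace ℝ (Fin (n - 1)))) (s := n - 1)
    (by rw [hdim, hcast]; linarith)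
  have hpolar := integral_one_sub_norm_sq_div_one_add_norm_sq_rpow_finrank
    (volume : Measure (EuclideanSpace ℝ (Fin (n - 1)))) (by omega)
  rw [hdim, hcast, sub_add_cancel] at hpolar
  rw [sphereVol_sub_two (by omega)]
  set V := volume.real (ball (0 : EuclideanSpace ℝ (Fin (n - 1))) 1)
  have hV : 0 < V :=
    ENNReal.toReal_pos (measure_ball_pos volume 0 one_pos).ne' measure_ball_lt_top.ne
  have hI : 0 < paperI ((n : ℝ) - 1) n :=
    hcast ▸ paperI_natCast_pos (m := n - 1) (k := n) (by omega)
  have hvalue : ∫ z : EuclideanSpace ℝ (Fin (n - 1)),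
      (fderiv ℝ (bubbleTrace n) z z + ((n : ℝ) - 2) / 2 * bubbleTrace n z) * bubbleTrace n z =
        -((n : ℝ) - 2) * V * paperI ((n : ℝ) - 1) n := by
    rw [hintegrand, integral_const_mul, hpolar]
    ring
  refine ⟨hintegrand ▸ hint.const_mul _, by rw [hintegrand, integral_const_mul], ?_, ?_⟩
  · rw [hvalue]
    have : (n : ℝ) - 1 ≠ 0 := by linarith
    field_simp
  · rw [hvalue]
    have : 0 < (n : ℝ) - 2 := by linarith
    nlinarith [mul_pos (mul_pos this hV) hI]
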